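/- arXiv:2509.13510 — 2 statements merged into one kernel-verified Lean document; each statement's English description precedes it below -/
import Mathlib

section
/- Let R be a commutative ℂ-algebra, L ⊂ Der(R) a Lie subalgebra and R-submodule, (E,∇) a flat L-connection and (E',∇') a flat L-connection. Then the operation (∇,∇')_v(D) := ∇'_v∘D − D∘∇_v on the quotient D^k(E,E')/S^k(∇) defines a flat partial connection: it is R-linear in v, satisfies the Leibniz rule (∇,∇')_v(f·D) = v(f)·D + f·(∇,∇')_v(D), and satisfies flatness (∇,∇')_{[v,w]} = [(∇,∇')_v, (∇,∇')_w]. -/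
/-!
STATEMENT 5: for flat L-connections (E, ∇), (E', ∇'), the operation
(∇,∇')_v(D) := ∇'_v ∘ D − D ∘ ∇_v descends to the quotient D^{k}(E,E')/S^{k}(∇) and defines a
flat partial connection there.  We state this as: the bracket preserves S^{k}(∇) (hence is
well defined on the quotient), is R-linear in v modulo S^{k}(∇), satisfies the Leibniz rule,
and is flat modulo S^{k}(∇).  Here k is the successor `k+1` of the parameter below, and
B v D = (∇,∇')_v(D).
-/

/-- Recursive definition of a differential operator of order ≤ k between modules. -/
def IsDiffOp (R : Type*) [CommRing R] {M N : Type*} [AddCommGroup M] [AddCommGroup N]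
    [Module R M] [Module R N] : ℕ → (M → N) → Prop
  | 0, D => (∀ s t, D (s + t) = D s + D t) ∧ ∀ (f : R) (s : M), D (f • s) = f • D s
  | k + 1, D => (∀ s t, D (s + t) = D s + D t) ∧
      ∀ f : R, IsDiffOp R k (fun s => D (f • s) - f • D s)

section Aux
variable {R : Type*} [CommRing R] {M N : Type*} [AddCommGroup M] [AddCommGroup N]
  [Module R M] [Module R N]

lemma IsDiffOp.myMapAdd {k : ℕ} {D : M → N} (h : IsDiffOp R k D) :
    ∀ s t, D (s + t) = D s + D t := by
  cases k with
  | zero => exact h.1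
  | succ k => exact h.1

lemma mySub {D : M → N} (h : ∀ s t, D (s + t) = D s + D t) :
    ∀ s t, D (s - t) = D s - D t := by
  intro s t
  have := h (s - t) t
  rw [sub_add_cancel] at this
  exact eq_sub_of_add_eq this.symm

lemma IsDiffOp.mySubOp {k : ℕ} {D D' : M → N} (h : IsDiffOp R k D) (h' : IsDiffOp R k D') :
    IsDiffOp R k (fun s => D s - D' s) := by
  induction k generalizing D D' with
  | zero =>
    exact ⟨fun s t => by simp only [h.1, h'.1]; abel,
      fun f s => by simp only [h.2, h'.2, smul_sub]⟩
  | succ k ih =>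
    refine ⟨fun s t => by simp only [h.myMapAdd, h'.myMapAdd]; abel, fun f => ?_⟩
    have heq : (fun s => (fun s => D s - D' s) (f • s) - f • (fun s => D s - D' s) s)
        = fun s => (D (f • s) - f • D s) - (D' (f • s) - f • D' s) := by
      funext s; simp only [smul_sub]; abel
    rw [heq]
    exact ih (h.2 f) (h'.2 f)

lemma bracket_isDiffOp (δ : R → R) (nv : M → M) (nv' : N → N)
    (hnv_add : ∀ s t, nv (s + t) = nv s + nv t)
    (hnv_leib : ∀ (f : R) (s : M), nv (f • s) = δ f • s + f • nv s)
    (hnv'_add : ∀ s t, nv' (s + t) = nv' s + nv' t)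
    (hnv'_leib : ∀ (f : R) (s : N), nv' (f • s) = δ f • s + f • nv' s) :
    ∀ (k : ℕ) (D : M → N), IsDiffOp R k D →
      IsDiffOp R k (fun s => nv' (D s) - D (nv s)) := by
  intro k
  induction k with
  | zero =>
    intro D h
    refine ⟨fun s t => by simp only [h.1, hnv_add, hnv'_add]; abel, fun f s => ?_⟩
    simp only [h.2, hnv'_leib, hnv_leib, h.1, smul_sub]
    abel
  | succ k ih =>
    intro D h
    refine ⟨fun s t => by simp only [h.1, hnv_add, hnv'_add]; abel, fun f => ?_⟩
    have heq : (fun s => (fun s => nv' (D s) - D (nv s)) (f • s)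
          - f • (fun s => nv' (D s) - D (nv s)) s)
        = fun s => (nv' ((fun t => D (f • t) - f • D t) s)
            - (fun t => D (f • t) - f • D t) (nv s))
          - ((fun t => D (δ f • t) - δ f • D t) s) := by
      funext s
      simp only [mySub hnv'_add, hnv'_leib, hnv_leib, h.myMapAdd, smul_sub]
      abel
    rw [heq]
    exact (ih _ (h.2 f)).mySubOp (h.2 (δ f))

end Aux

lemma myZero {R : Type*} [CommRing R] {M N : Type*} [AddCommGroup M] [AddCommGroup N]
    [Module R M] [Module R N] {D : M → N} (h : ∀ s t, D (s + t) = D s + D t) :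
    D 0 = 0 := by
  have := mySub h 0 0
  simpa using this

theorem stmt_5 (R : Type*) [CommRing R] [Algebra ℂ R]
    (E E' : Type*) [AddCommGroup E] [Module R E] [AddCommGroup E'] [Module R E']
    (L : Submodule R (Derivation ℂ R R))
    (hLie : ∀ v ∈ L, ∀ w ∈ L, ⁅v, w⁆ ∈ L)
    -- a flat L-connection on E
    (nabla : Derivation ℂ R R → E → E)
    (hadd : ∀ v ∈ L, ∀ s t : E, nabla v (s + t) = nabla v s + nabla v t)
    (hlin : ∀ (f : R) (v w : Derivation ℂ R R) (s : E),
      nabla (f • v + w) s = f • nabla v s + nabla w s)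
    (hLeib : ∀ v ∈ L, ∀ (f : R) (s : E), nabla v (f • s) = v f • s + f • nabla v s)
    (hflat : ∀ v ∈ L, ∀ w ∈ L, ∀ s : E,
      nabla ⁅v, w⁆ s = nabla v (nabla w s) - nabla w (nabla v s))
    -- a flat L-connection on E'
    (nabla' : Derivation ℂ R R → E' → E')
    (hadd' : ∀ v ∈ L, ∀ s t : E', nabla' v (s + t) = nabla' v s + nabla' v t)
    (hlin' : ∀ (f : R) (v w : Derivation ℂ R R) (s : E'),
      nabla' (f • v + w) s = f • nabla' v s + nabla' w s)
    (hLeib' : ∀ v ∈ L, ∀ (f : R) (s : E'), nabla' v (f • s) = v f • s + f • nabla' v s)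
    (hflat' : ∀ v ∈ L, ∀ w ∈ L, ∀ s : E',
      nabla' ⁅v, w⁆ s = nabla' v (nabla' w s) - nabla' w (nabla' v s))
    (k : ℕ)
    -- S^{k+1}(∇)
    (Sk : Submodule R (E → E'))
    (hSk : Sk = Submodule.span R
      {g : E → E' | ∃ (D : E → E') (v : Derivation ℂ R R),
        v ∈ L ∧ IsDiffOp R k D ∧ g = fun s => D (nabla v s)})
    -- the bracket operation (∇,∇')_v
    (B : Derivation ℂ R R → (E → E') → (E → E'))
    (hB : ∀ v D, B v D = fun s => nabla' v (D s) - D (nabla v s)) :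
    -- (a) the bracket preserves S^{k+1}(∇), so it is well defined on D^{k+1}(E,E')/S^{k+1}(∇)
    (∀ v ∈ L, ∀ g ∈ Sk, B v g ∈ Sk) ∧
    -- (b) R-linearity in v, modulo S^{k+1}(∇)
    (∀ (f : R), ∀ v ∈ L, ∀ (D : E → E'), IsDiffOp R (k + 1) D →
      B (f • v) D - f • B v D ∈ Sk) ∧
    -- (c) the Leibniz rule (∇,∇')_v(f·D) = v(f)·D + f·(∇,∇')_v(D), modulo S^{k+1}(∇)
    (∀ (f : R), ∀ v ∈ L, ∀ (D : E → E'), IsDiffOp R (k + 1) D →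
      B v (f • D) - (v f • D + f • B v D) ∈ Sk) ∧
    -- (d) flatness (∇,∇')_{[v,w]} = [(∇,∇')_v, (∇,∇')_w], modulo S^{k+1}(∇)
    (∀ v ∈ L, ∀ w ∈ L, ∀ (D : E → E'), IsDiffOp R (k + 1) D →
      B ⁅v, w⁆ D - (B v (B w D) - B w (B v D)) ∈ Sk) := by
  subst hSk
  -- `∇` and `∇'` kill the zero vector field and are `R`-linear in the vector field
  have h0 : ∀ s : E, nabla 0 s = 0 := by
    intro s
    have := hlin 1 0 0 s
    simp only [one_smul, add_zero] at this
    exact (left_eq_add.mp this)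
  have h0' : ∀ s : E', nabla' 0 s = 0 := by
    intro s
    have := hlin' 1 0 0 s
    simp only [one_smul, add_zero] at this
    exact (left_eq_add.mp this)
  have hsm : ∀ (f : R) (v : Derivation ℂ R R) (s : E), nabla (f • v) s = f • nabla v s := by
    intro f v s
    have := hlin f v 0 s
    rwa [add_zero, h0, add_zero] at this
  have hsm' : ∀ (f : R) (v : Derivation ℂ R R) (s : E'),
      nabla' (f • v) s = f • nabla' v s := by
    intro f v s
    have := hlin' f v 0 s
    rwa [add_zero, h0', add_zero] at this
  -- the bracket with `∇_v`, `∇'_v` preserves the order of differential operators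
  have hbr : ∀ v ∈ L, ∀ (m : ℕ) (D : E → E'), IsDiffOp R m D →
      IsDiffOp R m (fun s => nabla' v (D s) - D (nabla v s)) := by
    intro v hv m D hD
    exact bracket_isDiffOp (fun f => v f) (nabla v) (nabla' v)
      (hadd v hv) (hLeib v hv) (hadd' v hv) (hLeib' v hv) m D hD
  refine ⟨?_, ?_, ?_, ?_⟩
  -- (a)
  · intro v hv g hg
    induction hg using Submodule.span_induction with
    | mem g hgmem =>
      obtain ⟨D, w, hw, hD, rfl⟩ := hgmem
      have h1 : (fun s => (fun t => nabla' v (D t) - D (nabla v t)) (nabla w s)) ∈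
          Submodule.span R {g : E → E' | ∃ (D : E → E') (v : Derivation ℂ R R),
            v ∈ L ∧ IsDiffOp R k D ∧ g = fun s => D (nabla v s)} :=
        Submodule.subset_span ⟨_, w, hw, hbr v hv k D hD, rfl⟩
      have h2 : (fun s => D (nabla ⁅v, w⁆ s)) ∈
          Submodule.span R {g : E → E' | ∃ (D : E → E') (v : Derivation ℂ R R),
            v ∈ L ∧ IsDiffOp R k D ∧ g = fun s => D (nabla v s)} :=
        Submodule.subset_span ⟨D, ⁅v, w⁆, hLie v hv w hw, hD, rfl⟩
      have heq : B v (fun s => D (nabla w s)) =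
          (fun s => (fun t => nabla' v (D t) - D (nabla v t)) (nabla w s))
            + fun s => D (nabla ⁅v, w⁆ s) := by
        funext s
        simp only [hB, Pi.add_apply]
        rw [hflat v hv w hw, mySub hD.myMapAdd]
        abel
      rw [heq]
      exact Submodule.add_mem _ h1 h2
    | zero =>
      have heq : B v 0 = 0 := by
        funext s
        simp only [hB, Pi.zero_apply]
        rw [myZero (R := R) (hadd' v hv), sub_zero]
      rw [heq]
      exact Submodule.zero_mem _
    | add x y hx hy px py =>
      have heq : B v (x + y) = B v x + B v y := by
        funext s
        simp only [hB, Pi.add_apply, hadd' v hv]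
        abel
      rw [heq]
      exact Submodule.add_mem _ px py
    | smul a x hx px =>
      have heq : B v (a • x) = v a • x + a • B v x := by
        funext s
        simp only [hB, Pi.smul_apply, Pi.add_apply]
        rw [hLeib' v hv, smul_sub]
        abel
      rw [heq]
      exact Submodule.add_mem _ (Submodule.smul_mem _ _ hx) (Submodule.smul_mem _ _ px)
  -- (b)
  · intro f v hv D hD
    have heq : B (f • v) D - f • B v D
        = -(fun s => (fun t => D (f • t) - f • D t) (nabla v s)) := by
      funext s
      simp only [hB, Pi.sub_apply, Pi.smul_apply, Pi.neg_apply]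
      rw [hsm, hsm', smul_sub]
      abel
    rw [heq]
    exact Submodule.neg_mem _ (Submodule.subset_span ⟨_, v, hv, hD.2 f, rfl⟩)
  -- (c)
  · intro f v hv D hD
    have heq : B v (f • D) - (v f • D + f • B v D) = 0 := by
      funext s
      simp only [hB, Pi.sub_apply, Pi.add_apply, Pi.smul_apply, Pi.zero_apply]
      rw [hLeib' v hv, smul_sub]
      abel
    rw [heq]
    exact Submodule.zero_mem _
  -- (d)
  · intro v hv w hw D hD
    have heq : B ⁅v, w⁆ D - (B v (B w D) - B w (B v D)) = 0 := by
      funext s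
      simp only [hB, Pi.sub_apply, Pi.zero_apply]
      rw [hflat v hv w hw, hflat' v hv w hw, mySub (hadd' v hv), mySub (hadd' w hw),
        mySub hD.myMapAdd]
      abel
    rw [heq]
    exact Submodule.zero_mem _
end

section
/- Let F be a foliation on a complex manifold X, L a line bundle, and ∇ : L → Ω¹_X(D) ⊗ L a flat meromorphic connection with poles on an effective divisor D whose local connection form Ω/f has (Ω)₀ with no common component with D. If ∇ restricts to a holomorphic partial connection along F (i.e., Ω(v) ∈ (f) for all v ∈ T_F), then D is F-invariant, i.e., v(f) ∈ (f) for all v ∈ T_F. -/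
open Finset

/-!
STATEMENT 12 (local algebraic formulation, as allowed by the context): R is a UFD of
holomorphic germs with "coordinate" derivations ∂ᵢ.  The flat meromorphic connection on the
line bundle has connection form Ω/f with Ω = Σ Aᵢ dxᵢ holomorphic and f a local equation of
the polar divisor D; flatness f·dΩ = df ∧ Ω is expressed componentwise.  The zero divisor of
Ω shares no component with D: every prime dividing f fails to divide some Aᵢ.  A vector field
tangent to the foliation is v = Σ cᵢ ∂ᵢ; the hypothesis that the meromorphic connection
restricts to a holomorphic partial connection along F reads Ω(v) = Σ cᵢAᵢ ∈ (f).  Conclusion: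
v(f) = Σ cᵢ ∂ᵢf ∈ (f), i.e. D is F-invariant.
-/

lemma aux_dvd {R : Type*} [CommRing R] [IsDomain R] [UniqueFactorizationMonoid R]
    {n : ℕ} (A : Fin n → R) (f : R) :
    f ≠ 0 → ∀ S : R, (∀ p : R, Prime p → p ∣ f → ∃ i, ¬ p ∣ A i) →
      (∀ j, f ∣ S * A j) → f ∣ S := by
  induction f using UniqueFactorizationMonoid.induction_on_prime with
  | h₁ => intro h; exact absurd rfl h
  | h₂ u hu => intro _ S _ _; exact hu.dvd
  | h₃ a p ha hp IH =>
      intro _ S hgcd H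
      obtain ⟨j₀, hj₀⟩ := hgcd p hp (Dvd.intro a rfl)
      have hpS : p ∣ S := by
        rcases (hp.dvd_or_dvd (dvd_trans (Dvd.intro a rfl) (H j₀))) with h | h
        · exact h
        · exact absurd h hj₀
      obtain ⟨S', rfl⟩ := hpS
      have hgcd' : ∀ q : R, Prime q → q ∣ a → ∃ i, ¬ q ∣ A i :=
        fun q hq hqa => hgcd q hq (hqa.mul_left p)
      have H' : ∀ j, a ∣ S' * A j := by
        intro j
        have := H j
        rw [mul_assoc] at this
        exact (mul_dvd_mul_iff_left hp.ne_zero).mp this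
      exact mul_dvd_mul_left p (IH ha S' hgcd' H')

theorem stmt_12 (R : Type*) [CommRing R] [IsDomain R] [UniqueFactorizationMonoid R]
    [Algebra ℂ R]
    (n : ℕ) (pd : Fin n → Derivation ℂ R R)        -- the coordinate derivations ∂ᵢ
    (A : Fin n → R)                                 -- the components of Ω
    (c : Fin n → R)                                 -- the components of v ∈ T_F
    (f : R) (hf : f ≠ 0)
    -- flatness of the meromorphic connection: f·dΩ = df ∧ Ω, componentwise
    (hflat : ∀ i j : Fin n,
      f * (pd i (A j) - pd j (A i)) = pd i f * A j - pd j f * A i)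
    -- (Ω)₀ has no common component with D
    (hgcd : ∀ p : R, Prime p → p ∣ f → ∃ i, ¬ p ∣ A i)
    -- the connection restricts to a holomorphic partial connection: Ω(v) ∈ (f)
    (hΩv : f ∣ ∑ i, c i * A i) :
    -- D is F-invariant: v(f) ∈ (f)
    f ∣ ∑ i, c i * pd i f := by
  apply aux_dvd A f hf _ hgcd
  intro j
  have key : (∑ i, c i * pd i f) * A j
      = f * (∑ i, c i * (pd i (A j) - pd j (A i))) + pd j f * (∑ i, c i * A i) := by
    rw [Finset.sum_mul, Finset.mul_sum, Finset.mul_sum, ← Finset.sum_add_distrib]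
    apply Finset.sum_congr rfl
    intro i _
    linear_combination (-(c i)) * hflat i j
  rw [key]
  exact dvd_add (Dvd.intro _ rfl) (Dvd.dvd.mul_left hΩv _)
end
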